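/- For every s ∈ (0,1/2) ∪ (1/2,1) and every h > 0, the modified weight w₁^M is strictly negative: w₁^M < 0. -/

import Mathlib

/-- The constant `c_{1,s-1} = -2^{2s-2}(s-1)Γ(s-1/2)/(π^{1/2}Γ(2-s))`. -/
noncomputable def c1m (s : ℝ) : ℝ :=
  -(2 : ℝ) ^ (2 * s - 2) * (s - 1) * Real.Gamma (s - 1 / 2) /
    (Real.sqrt Real.pi * Real.Gamma (2 - s))

/-- The hat function `φ̄₁(y) = 1 - |y|/h` for `|y| < h`, `0` otherwise. -/
noncomputable def phiBar1 (h y : ℝ) : ℝ := if |y| < h then 1 - |y| / h else 0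

/-- The weight `ω̄_k = c_{1,s-1} ∫_{-h}^{h} |kh - y|^{1-2s} φ̄₁(y) dy`. -/
noncomputable def omegaBar (s h : ℝ) (k : ℤ) : ℝ :=
  c1m s * ∫ y in (-h)..h, |(k : ℝ) * h - y| ^ (1 - 2 * s) * phiBar1 h y

/-- The weight `w_k = -(ω̄_{k-1} - 2ω̄_k + ω̄_{k+1})/h²`. -/
noncomputable def wgt (s h : ℝ) (k : ℤ) : ℝ :=
  -(omegaBar s h (k - 1) - 2 * omegaBar s h k + omegaBar s h (k + 1)) / h ^ 2

/-- The modified weight `ω̄₀^M`: `0` if `w₁ ≥ 0`, `ω̄₀` if `w₁ < 0`. -/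
noncomputable def omegaBar0M (s h : ℝ) : ℝ :=
  if 0 ≤ wgt s h 1 then 0 else omegaBar s h 0

/-!
Rescaling `y = h t` gives `ω̄_k = c_{1,s-1} h^{2-2s} I_k` with
`I_k = ∫_{-1}^{1} |k - t|^{1-2s} (1 - |t|) dt`; as the hat function is the kernel of the second
difference, `I_k = (|k+1|^p - 2|k|^p + |k-1|^p) / ((p-1) p)` with `p = 3 - 2s`. Hence
`ω̄₀ - 2ω̄₁ + ω̄₂` and `ω̄₂ - 2ω̄₁` are positive multiples of `c_{1,s-1} (3^p - 4·2^p + 7)` and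
`c_{1,s-1} (3^p - 4·2^p + 5)`, and `c_{1,s-1}` has the sign of `Γ(s - 1/2)`.
For `s > 1/2` we have `p ∈ (1, 2)`, `c_{1,s-1} > 0`, and `3^p - 4·2^p` decreases to `-7` at `p = 2`,
so `w₁ < 0` and `w₁^M = w₁`. For `s < 1/2` we have `p ∈ (2, 3)`, `c_{1,s-1} < 0`, and
`3^p - 4·2^p` is convex on `[2, 3]` with end values `-7` and `-5`, so `ω̄₂ > 2ω̄₁`; this is
`w₁^M < 0` whenever `ω̄₀^M = 0`.
-/

open Real Set MeasureTheory intervalIntegral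

lemma Real.Gamma_neg_of_neg_one_lt_of_neg {x : ℝ} (h1 : -1 < x) (h0 : x < 0) : Gamma x < 0 := by
  have hpos : 0 < Gamma (x + 1) := Gamma_pos_of_pos (by linarith)
  rw [Gamma_add_one h0.ne] at hpos
  exact neg_of_mul_pos_right hpos h0.le

lemma c1m_eq (s : ℝ) :
    c1m s = 2 ^ (2 * s - 2) * (1 - s) / (√π * Gamma (2 - s)) * Gamma (s - 1 / 2) := by
  unfold c1m
  ring

lemma c1m_pos {s : ℝ} (hs : 1 / 2 < s) (hs1 : s < 1) : 0 < c1m s := by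
  rw [c1m_eq]
  have := Gamma_pos_of_pos (by linarith : 0 < 2 - s)
  have := Gamma_pos_of_pos (by linarith : 0 < s - 1 / 2)
  have : 0 < 1 - s := by linarith
  positivity

lemma c1m_neg {s : ℝ} (hs0 : 0 < s) (hs : s < 1 / 2) : c1m s < 0 := by
  rw [c1m_eq]
  have := Gamma_pos_of_pos (by linarith : 0 < 2 - s)
  have : 0 < 1 - s := by linarith
  exact mul_neg_of_pos_of_neg (by positivity)
    (Gamma_neg_of_neg_one_lt_of_neg (by linarith) (by linarith))

lemma intervalIntegrable_abs_rpow {β : ℝ} (hβ : -1 < β) (a b : ℝ) :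
    IntervalIntegrable (fun x => |x| ^ β) volume a b :=
  intervalIntegrable_of_even (fun x => by rw [abs_neg]) fun x hx =>
    (intervalIntegrable_rpow' hβ).congr fun y hy => by
      rw [uIoc_of_le hx.le] at hy
      simp only [abs_of_pos hy.1]

lemma rpow_mul_self_eq_rpow_add_one {β : ℝ} (hβ : β + 1 ≠ 0) (x : ℝ) :
    x ^ β * x = x ^ (β + 1) := by
  rcases eq_or_ne x 0 with rfl | hx
  · rw [mul_zero, zero_rpow hβ]
  · rw [rpow_add_one hx]

lemma integral_rpow_mul_sub {β : ℝ} (hβ : -1 < β) (a b m : ℝ) :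
    ∫ x in a..b, x ^ β * (x - m) =
      (b ^ (β + 2) - a ^ (β + 2)) / (β + 2) -
        m * ((b ^ (β + 1) - a ^ (β + 1)) / (β + 1)) := by
  have hβ1 : -1 < β + 1 := by linarith
  simp_rw [mul_sub, rpow_mul_self_eq_rpow_add_one (by linarith : β + 1 ≠ 0)]
  rw [integral_sub (intervalIntegrable_rpow' hβ1) ((intervalIntegrable_rpow' hβ).mul_const m),
    intervalIntegral.integral_mul_const, integral_rpow (Or.inl hβ1), integral_rpow (Or.inl hβ)]
  ring_nf

lemma integral_abs_rpow_mul_sub {β : ℝ} (hβ : -1 < β) {a b : ℝ} (ha : 0 ≤ a) (hab : a ≤ b)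
    (m : ℝ) : ∫ x in a..b, |x| ^ β * (x - m) =
      (b ^ (β + 2) - a ^ (β + 2)) / (β + 2) -
        m * ((b ^ (β + 1) - a ^ (β + 1)) / (β + 1)) := by
  rw [← integral_rpow_mul_sub hβ]
  refine integral_congr fun x hx => ?_
  rw [uIcc_of_le hab] at hx
  simp only [abs_of_nonneg (ha.trans hx.1)]

lemma integral_abs_rpow_mul_hat {β : ℝ} (hβ : -1 < β) :
    ∫ t in (-1)..1, |t| ^ β * (1 - |t|) = 2 / ((β + 1) * (β + 2)) := by
  have hint : ∀ a b : ℝ, IntervalIntegrable (fun t => |t| ^ β * (1 - |t|)) volume a b :=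
    fun a b => (intervalIntegrable_abs_rpow hβ a b).mul_continuousOn (by fun_prop)
  have hhalf : ∫ t in (0:ℝ)..1, |t| ^ β * (1 - |t|) = 1 / (β + 1) - 1 / (β + 2) := by
    calc ∫ t in (0:ℝ)..1, |t| ^ β * (1 - |t|) = ∫ t in (0:ℝ)..1, -(|t| ^ β * (t - 1)) :=
          integral_congr fun t ht => by
            rw [uIcc_of_le zero_le_one] at ht
            simp only [abs_of_nonneg ht.1]
            ring
      _ = 1 / (β + 1) - 1 / (β + 2) := by
          rw [intervalIntegral.integral_neg, integral_abs_rpow_mul_sub hβ le_rfl zero_le_one,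
            zero_rpow (by linarith), zero_rpow (by linarith)]
          simp only [one_rpow]
          ring
  have hsymm : ∫ t in (-1:ℝ)..0, |t| ^ β * (1 - |t|) =
      ∫ t in (0:ℝ)..1, |t| ^ β * (1 - |t|) := by
    simpa using (integral_comp_neg (a := (0:ℝ)) (b := 1) (fun t => |t| ^ β * (1 - |t|))).symm
  rw [← integral_add_adjacent_intervals (hint _ 0) (hint 0 _), hsymm, hhalf]
  have : β + 1 ≠ 0 := by linarith
  have : β + 2 ≠ 0 := by linarith
  field_simp
  ring

lemma integral_abs_sub_rpow_mul_hat {β k : ℝ} (hβ : -1 < β) (hk : 1 ≤ k) :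
    ∫ t in (-1)..1, |k - t| ^ β * (1 - |t|) =
      ((k + 1) ^ (β + 2) - 2 * k ^ (β + 2) + (k - 1) ^ (β + 2)) / ((β + 1) * (β + 2)) := by
  have hint : ∀ a b : ℝ, IntervalIntegrable (fun u => |u| ^ β * (1 - |k - u|)) volume a b :=
    fun a b => (intervalIntegrable_abs_rpow hβ a b).mul_continuousOn (by fun_prop)
  have hsub : ∫ t in (-1)..1, |k - t| ^ β * (1 - |t|) =
      ∫ u in (k - 1)..(k + 1), |u| ^ β * (1 - |k - u|) := by
    simpa [sub_neg_eq_add] using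
      integral_comp_sub_left (a := -1) (b := 1) (fun u => |u| ^ β * (1 - |k - u|)) k
  have hleft : ∫ u in (k - 1)..k, |u| ^ β * (1 - |k - u|) =
      ∫ u in (k - 1)..k, |u| ^ β * (u - (k - 1)) :=
    integral_congr fun u hu => by
      rw [uIcc_of_le (by linarith)] at hu
      rw [abs_of_nonneg (by linarith [hu.2] : 0 ≤ k - u)]
      ring
  have hright : ∫ u in k..(k + 1), |u| ^ β * (1 - |k - u|) =
      -∫ u in k..(k + 1), |u| ^ β * (u - (k + 1)) := by
    rw [← intervalIntegral.integral_neg]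
    refine integral_congr fun u hu => ?_
    rw [uIcc_of_le (by linarith)] at hu
    rw [abs_of_nonpos (by linarith [hu.1] : k - u ≤ 0)]
    ring
  have hpow : ∀ x : ℝ, x ^ (β + 2) = x ^ (β + 1) * x := fun x => by
    rw [rpow_mul_self_eq_rpow_add_one (by linarith)]
    ring_nf
  rw [hsub, ← integral_add_adjacent_intervals (hint _ k) (hint k _),
    hleft, hright, integral_abs_rpow_mul_sub hβ (by linarith) (by linarith),
    integral_abs_rpow_mul_sub hβ (by linarith) (by linarith)]
  simp only [hpow]
  have : β + 1 ≠ 0 := by linarith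
  have : β + 2 ≠ 0 := by linarith
  field_simp
  ring

lemma phiBar1_mul {h t : ℝ} (hh : 0 < h) (ht : |t| ≤ 1) : phiBar1 h (h * t) = 1 - |t| := by
  unfold phiBar1
  rw [abs_mul, abs_of_pos hh]
  split_ifs with hlt
  · field_simp
  · rw [le_antisymm ht (not_lt.1 fun h1 => hlt (by nlinarith))]
    ring

lemma integral_abs_sub_rpow_mul_phiBar1 {β h : ℝ} (hh : 0 < h) (k : ℝ) :
    ∫ y in (-h)..h, |k * h - y| ^ β * phiBar1 h y =
      h ^ (β + 1) * ∫ t in (-1)..1, |k - t| ^ β * (1 - |t|) := by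
  have hscale := smul_integral_comp_mul_left (a := -1) (b := 1) (E := ℝ)
    (fun y => |k * h - y| ^ β * phiBar1 h y) h
  rw [mul_neg, mul_one] at hscale
  rw [← hscale, smul_eq_mul, rpow_add_one hh.ne', mul_comm (h ^ β) h, mul_assoc,
    ← intervalIntegral.integral_const_mul (h ^ β)]
  congr 1
  refine integral_congr fun t ht => ?_
  rw [uIcc_of_le (by norm_num)] at ht
  rw [phiBar1_mul hh (abs_le.2 ht), show k * h - h * t = h * (k - t) by ring, abs_mul,
    abs_of_pos hh, mul_rpow hh.le (abs_nonneg _), mul_assoc]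


lemma nine_mul_log_three_lt_sixteen_mul_log_two : 9 * log 3 < 16 * log 2 := by
  have h := log_lt_log (by norm_num) (by norm_num : (3:ℝ) ^ 9 < 2 ^ 16)
  rw [log_pow, log_pow] at h
  push_cast at h
  linarith

lemma four_mul_log_two_lt_three_mul_log_three : 4 * log 2 < 3 * log 3 := by
  have h := log_lt_log (by norm_num) (by norm_num : (2:ℝ) ^ 4 < 3 ^ 3)
  rw [log_pow, log_pow] at h
  push_cast at h
  linarith

lemma three_rpow_eq_three_halves_rpow_mul_two_rpow (x : ℝ) :
    (3:ℝ) ^ x = (3 / 2) ^ x * 2 ^ x := by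
  rw [← mul_rpow (by norm_num) (by norm_num)]
  norm_num

lemma hasDerivAt_three_rpow_sub_four_mul_two_rpow (x : ℝ) :
    HasDerivAt (fun p : ℝ => 3 ^ p - 4 * 2 ^ p) (3 ^ x * log 3 - 4 * (2 ^ x * log 2)) x :=
  ((hasStrictDerivAt_const_rpow (by norm_num) x).hasDerivAt).sub
    (((hasStrictDerivAt_const_rpow (by norm_num) x).hasDerivAt).const_mul 4)

lemma hasDerivAt_deriv_three_rpow_sub_four_mul_two_rpow (x : ℝ) :
    HasDerivAt (fun p : ℝ => 3 ^ p * log 3 - 4 * (2 ^ p * log 2))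
      (3 ^ x * log 3 * log 3 - 4 * (2 ^ x * log 2 * log 2)) x :=
  (((hasStrictDerivAt_const_rpow (by norm_num) x).hasDerivAt).mul_const _).sub
    ((((hasStrictDerivAt_const_rpow (by norm_num) x).hasDerivAt).mul_const _).const_mul 4)

lemma continuous_three_rpow_sub_four_mul_two_rpow :
    Continuous (fun p : ℝ => (3:ℝ) ^ p - 4 * 2 ^ p) :=
  continuous_iff_continuousAt.2 fun x =>
    (hasDerivAt_three_rpow_sub_four_mul_two_rpow x).continuousAt

lemma strictAntiOn_three_rpow_sub_four_mul_two_rpow :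
    StrictAntiOn (fun p : ℝ => (3:ℝ) ^ p - 4 * 2 ^ p) (Iic 2) := by
  refine strictAntiOn_of_hasDerivWithinAt_neg (convex_Iic 2)
    continuous_three_rpow_sub_four_mul_two_rpow.continuousOn
    (fun x _ => (hasDerivAt_three_rpow_sub_four_mul_two_rpow x).hasDerivWithinAt) fun x hx => ?_
  rw [interior_Iic] at hx
  have hpow : ((3:ℝ) / 2) ^ x ≤ 9 / 4 := by
    calc ((3:ℝ) / 2) ^ x ≤ (3 / 2) ^ (2:ℝ) := rpow_le_rpow_of_exponent_le (by norm_num) hx.le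
      _ = 9 / 4 := by norm_num
  have h2 : (0:ℝ) < 2 ^ x := by positivity
  have hlog3 : 0 < log 3 := log_pos (by norm_num)
  have := nine_mul_log_three_lt_sixteen_mul_log_two
  rw [sub_neg]
  calc (3:ℝ) ^ x * log 3 = (3 / 2) ^ x * (2 ^ x * log 3) := by
        rw [three_rpow_eq_three_halves_rpow_mul_two_rpow, mul_assoc]
    _ ≤ 9 / 4 * (2 ^ x * log 3) := by gcongr
    _ < 4 * (2 ^ x * log 2) := by nlinarith

lemma convexOn_three_rpow_sub_four_mul_two_rpow :
    ConvexOn ℝ (Ici 2) (fun p : ℝ => (3:ℝ) ^ p - 4 * 2 ^ p) := by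
  refine convexOn_of_hasDerivWithinAt2_nonneg (convex_Ici 2)
    continuous_three_rpow_sub_four_mul_two_rpow.continuousOn
    (fun x _ => (hasDerivAt_three_rpow_sub_four_mul_two_rpow x).hasDerivWithinAt)
    (fun x _ => (hasDerivAt_deriv_three_rpow_sub_four_mul_two_rpow x).hasDerivWithinAt)
    fun x hx => ?_
  rw [interior_Ici] at hx
  have hpow : 9 / 4 ≤ ((3:ℝ) / 2) ^ x := by
    calc (9:ℝ) / 4 = (3 / 2) ^ (2:ℝ) := by norm_num
      _ ≤ (3 / 2) ^ x := rpow_le_rpow_of_exponent_le (by norm_num) hx.le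
  have h2 : (0:ℝ) < 2 ^ x := by positivity
  have hlog2 : 0 < log 2 := log_pos (by norm_num)
  have := four_mul_log_two_lt_three_mul_log_three
  have hlog : 4 * (log 2 * log 2) ≤ 9 / 4 * (log 3 * log 3) := by nlinarith
  have : 4 * (2 ^ x * log 2 * log 2) ≤ 3 ^ x * log 3 * log 3 :=
    calc 4 * (2 ^ x * log 2 * log 2) = 2 ^ x * (4 * (log 2 * log 2)) := by ring
      _ ≤ 2 ^ x * (9 / 4 * (log 3 * log 3)) := by gcongr
      _ ≤ 2 ^ x * ((3 / 2) ^ x * (log 3 * log 3)) := by gcongr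
      _ = 3 ^ x * log 3 * log 3 := by
        rw [three_rpow_eq_three_halves_rpow_mul_two_rpow]
        ring
  linarith

lemma neg_seven_lt_three_rpow_sub_four_mul_two_rpow {p : ℝ} (hp : p < 2) :
    -7 < (3:ℝ) ^ p - 4 * 2 ^ p := by
  have := strictAntiOn_three_rpow_sub_four_mul_two_rpow (mem_Iic.2 hp.le) (mem_Iic.2 le_rfl) hp
  norm_num at this
  linarith

lemma three_rpow_sub_four_mul_two_rpow_lt_neg_five {p : ℝ} (hp2 : 2 ≤ p) (hp3 : p < 3) :
    (3:ℝ) ^ p - 4 * 2 ^ p < -5 := by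
  have := convexOn_three_rpow_sub_four_mul_two_rpow.2 (mem_Ici.2 le_rfl)
    (by norm_num : (3:ℝ) ∈ Ici 2) (by linarith : 0 ≤ 3 - p) (by linarith : 0 ≤ p - 2) (by ring)
  norm_num [smul_eq_mul] at this
  rw [show (3 - p) * 2 + (p - 2) * 3 = p by ring] at this
  linarith

lemma omegaBar_eq (s h : ℝ) (hh : 0 < h) (k : ℤ) :
    omegaBar s h k =
      c1m s * h ^ (1 - 2 * s + 1) * ∫ t in (-1)..1, |k - t| ^ (1 - 2 * s) * (1 - |t|) := by
  rw [omegaBar, integral_abs_sub_rpow_mul_phiBar1 hh, mul_assoc]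

lemma omegaBar_zero_sub_two_mul_omegaBar_one_add_omegaBar_two {s h : ℝ} (hs : s < 1)
    (hh : 0 < h) :
    omegaBar s h 0 - 2 * omegaBar s h 1 + omegaBar s h 2 =
      c1m s * h ^ (1 - 2 * s + 1) / ((1 - 2 * s + 1) * (1 - 2 * s + 2)) *
        (3 ^ (1 - 2 * s + 2) - 4 * 2 ^ (1 - 2 * s + 2) + 7) := by
  have hβ : -1 < 1 - 2 * s := by linarith
  simp only [omegaBar_eq s h hh]
  push_cast
  rw [integral_abs_sub_rpow_mul_hat hβ le_rfl, integral_abs_sub_rpow_mul_hat hβ one_le_two]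
  simp only [zero_sub, abs_neg]
  rw [integral_abs_rpow_mul_hat hβ]
  norm_num
  rw [zero_rpow (by linarith)]
  ring

lemma omegaBar_two_sub_two_mul_omegaBar_one {s h : ℝ} (hs : s < 1) (hh : 0 < h) :
    omegaBar s h 2 - 2 * omegaBar s h 1 =
      c1m s * h ^ (1 - 2 * s + 1) / ((1 - 2 * s + 1) * (1 - 2 * s + 2)) *
        (3 ^ (1 - 2 * s + 2) - 4 * 2 ^ (1 - 2 * s + 2) + 5) := by
  have hβ : -1 < 1 - 2 * s := by linarith
  simp only [omegaBar_eq s h hh]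
  push_cast
  rw [integral_abs_sub_rpow_mul_hat hβ le_rfl, integral_abs_sub_rpow_mul_hat hβ one_le_two]
  norm_num
  rw [zero_rpow (by linarith)]
  ring

lemma wgt_one_neg {s h : ℝ} (hs : 1 / 2 < s) (hs1 : s < 1) (hh : 0 < h) : wgt s h 1 < 0 := by
  have hw : wgt s h 1 = -(omegaBar s h 0 - 2 * omegaBar s h 1 + omegaBar s h 2) / h ^ 2 := by
    norm_num [wgt]
  rw [hw, omegaBar_zero_sub_two_mul_omegaBar_one_add_omegaBar_two hs1 hh]
  have hgap := neg_seven_lt_three_rpow_sub_four_mul_two_rpow (p := 1 - 2 * s + 2) (by linarith)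
  have hden : 0 < (1 - 2 * s + 1) * (1 - 2 * s + 2) := by nlinarith
  refine div_neg_of_neg_of_pos (neg_neg_of_pos (mul_pos ?_ (by linarith))) (by positivity)
  exact div_pos (mul_pos (c1m_pos hs hs1) (by positivity)) hden

lemma two_mul_omegaBar_one_lt_omegaBar_two {s h : ℝ} (hs0 : 0 < s) (hs : s < 1 / 2)
    (hh : 0 < h) :
    2 * omegaBar s h 1 < omegaBar s h 2 := by
  rw [← sub_pos, omegaBar_two_sub_two_mul_omegaBar_one (by linarith) hh]
  have hgap := three_rpow_sub_four_mul_two_rpow_lt_neg_five (p := 1 - 2 * s + 2) (by linarith)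
    (by linarith)
  have hden : 0 < (1 - 2 * s + 1) * (1 - 2 * s + 2) := by nlinarith
  refine mul_pos_of_neg_of_neg ?_ (by linarith)
  exact div_neg_of_neg_of_pos (mul_neg_of_neg_of_pos (c1m_neg hs0 hs) (by positivity)) hden

/-- the modified weight `w₁^M = -(ω̄₀^M - 2ω̄₁ + ω̄₂)/h²` is strictly negative. -/
theorem stmt10 (s : ℝ) (hs : s ∈ Set.Ioo (0 : ℝ) (1 / 2) ∪ Set.Ioo (1 / 2 : ℝ) 1)
    (h : ℝ) (hh : 0 < h) :
    -(omegaBar0M s h - 2 * omegaBar s h 1 + omegaBar s h 2) / h ^ 2 < 0 := by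
  unfold omegaBar0M
  split_ifs with hw
  · rcases hs with ⟨hs0, hs⟩ | ⟨hs, hs1⟩
    · have := two_mul_omegaBar_one_lt_omegaBar_two hs0 hs hh
      apply div_neg_of_neg_of_pos _ (by positivity)
      linarith
    · exact absurd hw (wgt_one_neg hs hs1 hh).not_ge
  · simpa [wgt] using hw
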